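/- arXiv:math/0507228 — 4 statements merged into one kernel-verified Lean document; each statement's English description precedes it below -/
import Mathlib

section
/- Let x > 1 and y > e be real numbers related by y = x / log x. Then y · log y ≥ x · (1 − 1/e), and hence x ≤ (e/(e−1)) · y · log y. -/
open Real

theorem xy_log_ineq (x y : ℝ) (hx : 1 < x) (hy : Real.exp 1 < y)
    (hxy : y = x / Real.log x) :
    y * Real.log y ≥ x * (1 - 1 / Real.exp 1) ∧
    x ≤ (Real.exp 1 / (Real.exp 1 - 1)) * (y * Real.log y) := by
  have hxpos : (0:ℝ) < x := by linarith
  have ht : 0 < Real.log x := Real.log_pos hx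
  have he : (0:ℝ) < Real.exp 1 := Real.exp_pos 1
  have he1 : (1:ℝ) < Real.exp 1 := by
    have := Real.add_one_lt_exp (x := 1) one_ne_zero
    linarith
  -- log (log x) ≤ log x / e
  have hkey : Real.log (Real.log x) ≤ Real.log x / Real.exp 1 := by
    have h1 : Real.log (Real.log x / Real.exp 1) ≤ Real.log x / Real.exp 1 - 1 :=
      Real.log_le_sub_one_of_pos (div_pos ht he)
    rw [Real.log_div (ne_of_gt ht) (Real.exp_ne_zero 1), Real.log_exp] at h1
    linarith
  have hlogy : Real.log y = Real.log x - Real.log (Real.log x) := by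
    rw [hxy, Real.log_div (ne_of_gt hxpos) (ne_of_gt ht)]
  have hmain : y * Real.log y ≥ x * (1 - 1 / Real.exp 1) := by
    rw [hlogy, hxy]
    rw [ge_iff_le, div_mul_eq_mul_div, le_div_iff₀ ht]
    have h2 : x * Real.log (Real.log x) ≤ x * (Real.log x / Real.exp 1) :=
      mul_le_mul_of_nonneg_left hkey hxpos.le
    have h3 : x * (Real.log x / Real.exp 1) = x * (1 / Real.exp 1) * Real.log x := by
      ring
    nlinarith [h2, h3]
  refine ⟨hmain, ?_⟩
  have hfrac : Real.exp 1 / (Real.exp 1 - 1) * (1 - 1 / Real.exp 1) = 1 := by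
    rw [show (1 - 1 / Real.exp 1) = (Real.exp 1 - 1) / Real.exp 1 by
      field_simp]
    rw [div_mul_div_comm, mul_comm (Real.exp 1) (Real.exp 1 - 1)]
    exact div_self (ne_of_gt (mul_pos (by linarith) he))
  have hcpos : 0 < Real.exp 1 / (Real.exp 1 - 1) := div_pos he (by linarith)
  calc x = Real.exp 1 / (Real.exp 1 - 1) * (x * (1 - 1 / Real.exp 1)) := by
            rw [show Real.exp 1 / (Real.exp 1 - 1) * (x * (1 - 1 / Real.exp 1))
              = x * (Real.exp 1 / (Real.exp 1 - 1) * (1 - 1 / Real.exp 1)) by ring,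
              hfrac, mul_one]
    _ ≤ Real.exp 1 / (Real.exp 1 - 1) * (y * Real.log y) := by
            exact mul_le_mul_of_nonneg_left hmain (le_of_lt hcpos)
end

section
/- Let G be an abelian group and h : G → ℝ a nonnegative function satisfying the parallelogram law. For any finite set Z = {P₁,…,P_N} of N points in G, we have (1/N²)·∑_{1≤i,j≤N, i≠j} h(P_i − P_j) ≤ (4/N)·∑_{1≤i≤N} h(P_i). -/
open Finset

theorem avg_pairwise_height_bound {G : Type*} [AddCommGroup G] (h : G → ℝ)
    (hpar : ∀ P Q : G, h (P + Q) + h (P - Q) = 2 * h P + 2 * h Q)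
    (hnonneg : ∀ R : G, 0 ≤ h R)
    (N : ℕ) (hN : 0 < N) (P : Fin N → G) :
    (1 / (N : ℝ) ^ 2) *
        ∑ i : Fin N, ∑ j : Fin N, (if i ≠ j then h (P i - P j) else 0) ≤
      (4 / (N : ℝ)) * ∑ i : Fin N, h (P i) := by
  have key : ∑ i : Fin N, ∑ j : Fin N, (if i ≠ j then h (P i - P j) else 0)
      ≤ ∑ i : Fin N, ∑ j : Fin N, (2 * h (P i) + 2 * h (P j)) := by
    apply Finset.sum_le_sum; intro i _
    apply Finset.sum_le_sum; intro j _
    by_cases hij : i = j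
    · simp only [hij, ne_eq, not_true_eq_false, if_false]
      have := hnonneg (P j); linarith
    · simp only [ne_eq, hij, not_false_eq_true, if_true]
      have h1 := hpar (P i) (P j)
      have h2 := hnonneg (P i + P j)
      linarith
  have sum2 : ∑ i : Fin N, ∑ j : Fin N, (2 * h (P i) + 2 * h (P j))
      = 4 * N * ∑ i : Fin N, h (P i) := by
    simp [Finset.sum_add_distrib, Finset.mul_sum, Finset.card_univ]
    rw [← Finset.sum_add_distrib]
    exact Finset.sum_congr rfl fun x _ => by ring
  have hN' : (0:ℝ) < N := by exact_mod_cast hN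
  have hT : 0 ≤ ∑ i : Fin N, h (P i) := Finset.sum_nonneg fun i _ => hnonneg _
  rw [sum2] at key
  rw [div_mul_eq_mul_div, div_mul_eq_mul_div, div_le_div_iff₀ (by positivity) hN']
  nlinarith [key, hT, hN']
end

section
/- Let G be an abelian group and h : G → ℝ≥0 a function with h(mP) = m²·h(P) for all integers m and P ∈ G. Suppose that for constants S ≥ 0 and T ≥ 1, the set {P ∈ G : h(P) ≤ S} has at most T elements. Then every P ∈ G with h(P) > 0 satisfies h(P) ≥ S/T². -/
/-- lower bound `S/T²` for positive values of a nonnegative quadratic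
function whose sublevel set `{h ≤ S}` has at most `T` elements. -/
theorem height_lower_bound_of_small_points
    {G : Type*} [AddCommGroup G] (h : G → ℝ)
    (hnonneg : ∀ P, 0 ≤ h P)
    (hquad : ∀ (m : ℤ) (P : G), h (m • P) = (m : ℝ) ^ 2 * h P)
    (S : ℝ) (hS : 0 ≤ S) (T : ℕ) (hT : 1 ≤ T)
    (hsmall : ∀ F : Finset G, (∀ P ∈ F, h P ≤ S) → F.card ≤ T) :
    ∀ P : G, 0 < h P → S / (T : ℝ) ^ 2 ≤ h P := by
  intro P hP
  classical
  by_contra hcon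
  push_neg at hcon
  have hTpos : (0 : ℝ) < (T : ℝ) := by exact_mod_cast hT
  have hT2 : (0 : ℝ) < (T : ℝ) ^ 2 := by positivity
  -- the map m ↦ m • P on range (T+1)
  have hinj : ¬ Function.Injective (fun m : ℕ => (m : ℤ) • P) ∨ True := Or.inr trivial
  set f : ℕ → G := fun m => (m : ℤ) • P with hf
  have hsub : ∀ m ∈ Finset.range (T + 1), h (f m) ≤ S := by
    intro m hm
    have hmT : (m : ℝ) ≤ (T : ℝ) := by
      have : m ≤ T := Nat.lt_succ_iff.mp (Finset.mem_range.mp hm)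
      exact_mod_cast this
    have : h (f m) = (m : ℝ) ^ 2 * h P := hquad m P
    rw [this]
    have h1 : (m : ℝ) ^ 2 * h P ≤ (T : ℝ) ^ 2 * h P := by
      apply mul_le_mul_of_nonneg_right _ (le_of_lt hP)
      exact pow_le_pow_left₀ (by positivity) hmT 2
    have h2 : (T : ℝ) ^ 2 * h P < (T : ℝ) ^ 2 * (S / (T : ℝ) ^ 2) :=
      mul_lt_mul_of_pos_left hcon hT2
    have h3 : (T : ℝ) ^ 2 * (S / (T : ℝ) ^ 2) = S := by
      field_simp
    linarith
  have hcard := hsmall ((Finset.range (T + 1)).image f) (by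
    intro Q hQ
    obtain ⟨m, hm, rfl⟩ := Finset.mem_image.mp hQ
    exact hsub m hm)
  -- f is not injective on range (T+1)
  have : ¬ Set.InjOn f (Finset.range (T + 1)) := by
    intro hinj'
    have := Finset.card_image_of_injOn hinj'
    rw [this, Finset.card_range] at hcard
    omega
  rw [Set.InjOn] at this
  push_neg at this
  obtain ⟨m, hm, n, hn, heq, hne⟩ := this
  simp only [hf] at heq
  -- then (m - n) • P = 0 with m ≠ n
  have hzero : ((m : ℤ) - (n : ℤ)) • P = 0 := by
    rw [sub_smul, heq, sub_self]
  have h0 : h (((m : ℤ) - (n : ℤ)) • P) = ((m : ℝ) - (n : ℝ)) ^ 2 * h P := by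
    rw [hquad]; push_cast; ring
  rw [hzero] at h0
  have hzeroval : h (0 : G) = 0 := by
    have := hquad 0 P
    simpa using this
  rw [hzeroval] at h0
  have : ((m : ℝ) - (n : ℝ)) ^ 2 = 0 := by
    rcases mul_eq_zero.mp h0.symm with h | h
    · exact h
    · linarith
  have : (m : ℝ) = (n : ℝ) := by
    have := pow_eq_zero_iff (n := 2) (by norm_num) |>.mp this
    linarith
  exact hne (by exact_mod_cast this)
end

section
/- Let τ = a + bi with b > 0 lie in the upper half plane, and let j denote the modular j-function. Then 2πb ≤ log⁺|j(τ)| + 6, where log⁺ x = max(log x, 0). (It suffices to prove this for τ in the standard fundamental domain, where b ≥ √3/2.) -/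
/-!
In terms of the nome `q = e^{2πiτ}`, `j = (1 + 240 S(q))³ / (q P(q))` with the Lambert series
`S(q) = ∑ σ₃(n) qⁿ` and `P(q) = ∏ (1 - qⁿ)²⁴`. If `2π Im τ ≤ 6` there is nothing to prove;
otherwise `|q| = e^{-2π Im τ} < e^{-6} < 1/300`. For such `q`, bounding `(d + 1)³` by `8ᵈ` gives
`|1 + 240 S(q)| ≥ 1/6`, and writing `P(q)` as the exponential of a sum of principal logarithms,
each at most `(3/2)|q|ⁿ`, gives `|P(q)| ≤ 8/7`. Hence `|j| ≥ 1/(300 |q|) ≥ e^{2π Im τ - 6}`.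
-/

open Real

/-- The nome `q = e^{2πiτ}`. -/
noncomputable def nome (τ : ℂ) : ℂ := Complex.exp (2 * Real.pi * Complex.I * τ)

/-- The modular discriminant `Δ(τ) = (2π)¹² q ∏_{n≥1} (1−qⁿ)²⁴`. -/
noncomputable def modularDelta (τ : ℂ) : ℂ :=
  (2 * Real.pi) ^ 12 * nome τ * ∏' n : ℕ, (1 - nome τ ^ (n + 1)) ^ 24

/-- The Eisenstein series `g₂(τ) = ((2π)⁴/12)(1 + 240 ∑_{d≥1} ∑_{m≥1} d³ q^{md})`. -/
noncomputable def eisensteinGTwo (τ : ℂ) : ℂ :=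
  (2 * Real.pi) ^ 4 / 12 *
    (1 + 240 * ∑' d : ℕ, ∑' m : ℕ, ((d : ℂ) + 1) ^ 3 * nome τ ^ ((m + 1) * (d + 1)))

/-- The modular `j`-function `j(τ) = 1728 g₂(τ)³ / Δ(τ)`. -/
noncomputable def modularJ (τ : ℂ) : ℂ :=
  1728 * eisensteinGTwo τ ^ 3 / modularDelta τ

noncomputable def sigmaThreeSeries (q : ℂ) : ℂ :=
  ∑' d : ℕ, ∑' m : ℕ, ((d : ℂ) + 1) ^ 3 * q ^ ((m + 1) * (d + 1))

noncomputable def deltaProduct (q : ℂ) : ℂ :=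
  ∏' n : ℕ, (1 - q ^ (n + 1)) ^ 24

noncomputable def jOfNome (q : ℂ) : ℂ :=
  (1 + 240 * sigmaThreeSeries q) ^ 3 / (q * deltaProduct q)

lemma norm_nome (τ : ℂ) : ‖nome τ‖ = exp (-(2 * π * τ.im)) := by
  simp [nome, Complex.norm_exp, Complex.mul_re, Complex.mul_im]

lemma modularJ_eq (τ : ℂ) : modularJ τ = jOfNome (nome τ) := by
  have h2π : (2 * π : ℂ) ^ 12 ≠ 0 := pow_ne_zero _ (by exact_mod_cast two_pi_pos.ne')
  rw [jOfNome, modularJ, eisensteinGTwo, modularDelta, mul_assoc _ (nome τ),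
    ← mul_div_mul_left ((1 + 240 * sigmaThreeSeries (nome τ)) ^ 3) _ h2π]
  congr 1
  rw [sigmaThreeSeries]
  ring

lemma add_one_pow_three_le_eight_pow (d : ℕ) : ((d : ℝ) + 1) ^ 3 ≤ 8 ^ d := by
  have h : d + 1 ≤ 2 ^ d := Nat.lt_two_pow_self
  calc ((d : ℝ) + 1) ^ 3 ≤ ((2 : ℝ) ^ d) ^ 3 := by gcongr; exact_mod_cast h
    _ = 8 ^ d := by rw [← pow_mul, mul_comm, pow_mul]; norm_num

lemma norm_sigmaThreeSeries_le {q : ℂ} (hq : ‖q‖ < 1 / 8) :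
    ‖sigmaThreeSeries q‖ ≤ ‖q‖ / ((1 - ‖q‖) * (1 - 8 * ‖q‖)) := by
  set r := ‖q‖
  have hr : 0 ≤ r := norm_nonneg q
  have hgeo : HasSum (fun m : ℕ ↦ r ^ m) (1 - r)⁻¹ := hasSum_geometric_of_lt_one hr (by linarith)
  have hgeo8 : HasSum (fun d : ℕ ↦ (8 * r) ^ d) (1 - 8 * r)⁻¹ :=
    hasSum_geometric_of_lt_one (by positivity) (by linarith)
  have hinner (d : ℕ) : ‖∑' m : ℕ, ((d : ℂ) + 1) ^ 3 * q ^ ((m + 1) * (d + 1))‖ ≤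
      r * (8 * r) ^ d * (1 - r)⁻¹ := by
    refine tsum_of_norm_bounded (hgeo.mul_left (r * (8 * r) ^ d)) fun m ↦ ?_
    have hexp : d + 1 + m ≤ (m + 1) * (d + 1) := by nlinarith
    calc ‖((d : ℂ) + 1) ^ 3 * q ^ ((m + 1) * (d + 1))‖
        = ((d : ℝ) + 1) ^ 3 * r ^ ((m + 1) * (d + 1)) := by
          rw [norm_mul, norm_pow, norm_pow]; norm_cast
      _ ≤ 8 ^ d * r ^ (d + 1 + m) :=
          mul_le_mul (add_one_pow_three_le_eight_pow d)
            (pow_le_pow_of_le_one hr (by linarith) hexp) (by positivity) (by positivity)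
      _ = r * (8 * r) ^ d * r ^ m := by ring
  calc ‖sigmaThreeSeries q‖ ≤ r * (1 - 8 * r)⁻¹ * (1 - r)⁻¹ :=
        tsum_of_norm_bounded ((hgeo8.mul_left r).mul_right (1 - r)⁻¹) hinner
    _ = r / ((1 - r) * (1 - 8 * r)) := by field_simp

open Complex in
lemma exists_tprod_one_add_eq_cexp {ι : Type*} {f : ι → ℂ} {s : ℝ}
    (hs : HasSum (fun i ↦ ‖f i‖) s) (hf : ∀ i, ‖f i‖ ≤ 1 / 2) :
    ∃ L : ℂ, ∏' i, (1 + f i) = cexp L ∧ ‖L‖ ≤ 3 / 2 * s := by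
  have hne : ∀ i, 1 + f i ≠ 0 := fun i h ↦ by
    have : ‖f i‖ = 1 := by rw [eq_neg_of_add_eq_zero_right h, norm_neg, norm_one]
    linarith [hf i]
  have hlog := summable_log_one_add_of_summable hs.summable.of_norm
  refine ⟨∑' i, log (1 + f i), (cexp_tsum_eq_tprod hne hlog).symm, ?_⟩
  exact tsum_of_norm_bounded (hs.mul_left (3 / 2)) fun i ↦ norm_log_one_add_half_le_self (hf i)

lemma deltaProduct_ne_zero_and_norm_le {q : ℂ} (hq : ‖q‖ ≤ 1 / 2) :
    deltaProduct q ≠ 0 ∧ ‖deltaProduct q‖ ≤ exp (36 * (‖q‖ / (1 - ‖q‖))) := by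
  have hpow (n : ℕ) : ‖-q ^ (n + 1)‖ ≤ ‖q‖ := by
    rw [norm_neg, norm_pow]
    exact pow_le_of_le_one (norm_nonneg q) (by linarith) n.succ_ne_zero
  have hs : HasSum (fun n : ℕ ↦ ‖-q ^ (n + 1)‖) (‖q‖ / (1 - ‖q‖)) := by
    simpa [norm_pow, pow_succ', div_eq_mul_inv] using
      (hasSum_geometric_of_lt_one (norm_nonneg q) (by linarith)).mul_left ‖q‖
  obtain ⟨L, hL, hLs⟩ := exists_tprod_one_add_eq_cexp hs fun n ↦ (hpow n).trans hq
  have hΔ : deltaProduct q = Complex.exp (24 * L) := by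
    rw [deltaProduct, (ModularForm.multipliable_one_sub_pow (by linarith)).tprod_pow]
    simp only [sub_eq_add_neg]
    rw [hL, ← Complex.exp_nat_mul]
    norm_num
  refine ⟨hΔ ▸ Complex.exp_ne_zero _, ?_⟩
  rw [hΔ, Complex.norm_exp]
  gcongr
  calc (24 * L).re ≤ ‖24 * L‖ := Complex.re_le_norm _
    _ = 24 * ‖L‖ := by rw [norm_mul]; norm_num
    _ ≤ 36 * (‖q‖ / (1 - ‖q‖)) := by linarith

lemma exp_neg_six_le : exp (-6) ≤ 1 / 300 := by
  rw [exp_neg, ← one_div, one_div_le_one_div (exp_pos 6) (by norm_num)]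
  calc (300 : ℝ) ≤ 2.7182818283 ^ 6 := by norm_num
    _ ≤ exp 1 ^ 6 := by gcongr; exact exp_one_gt_d9.le
    _ = exp 6 := by rw [← exp_nat_mul]; norm_num

lemma one_div_le_norm_jOfNome {q : ℂ} (hq0 : q ≠ 0) (hq : ‖q‖ ≤ 1 / 300) :
    1 / (300 * ‖q‖) ≤ ‖jOfNome q‖ := by
  set r := ‖q‖
  have hr : 0 < r := norm_pos_iff.mpr hq0
  obtain ⟨hΔ0, hΔ⟩ := deltaProduct_ne_zero_and_norm_le (q := q) (by linarith)
  have hS : ‖240 * sigmaThreeSeries q‖ ≤ 5 / 6 := by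
    rw [norm_mul, show ‖(240 : ℂ)‖ = 240 by norm_num]
    have hsum := norm_sigmaThreeSeries_le (q := q) (by linarith)
    have hbound : r / ((1 - r) * (1 - 8 * r)) ≤ 1 / 288 := by
      rw [div_le_iff₀ (by nlinarith)]; nlinarith
    linarith
  have hA : 1 / 6 ≤ ‖1 + 240 * sigmaThreeSeries q‖ := by
    have htri := norm_sub_le (1 + 240 * sigmaThreeSeries q) (240 * sigmaThreeSeries q)
    rw [add_sub_cancel_right, norm_one] at htri
    linarith
  have hΔ' : ‖deltaProduct q‖ ≤ 8 / 7 := by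
    have hx : 36 * (r / (1 - r)) ≤ 1 / 8 := by
      rw [mul_div_assoc', div_le_iff₀ (by linarith)]; linarith
    calc ‖deltaProduct q‖ ≤ exp (1 / 8) := hΔ.trans (exp_le_exp.2 hx)
      _ ≤ 1 / (1 - 1 / 8) := exp_bound_div_one_sub_of_interval (by norm_num) (by norm_num)
      _ = 8 / 7 := by norm_num
  have hΔpos : 0 < ‖deltaProduct q‖ := norm_pos_iff.mpr hΔ0
  calc 1 / (300 * r) ≤ (1 / 6) ^ 3 / (8 / 7) / r := by
        rw [← div_div]; exact div_le_div_of_nonneg_right (by norm_num) hr.le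
    _ ≤ ‖1 + 240 * sigmaThreeSeries q‖ ^ 3 / ‖deltaProduct q‖ / r := by gcongr
    _ = ‖jOfNome q‖ := by rw [jOfNome, norm_div, norm_pow, norm_mul, div_div, mul_comm r]

theorem two_pi_im_le_log_j_general (τ : ℂ) :
    2 * Real.pi * τ.im ≤ max (Real.log ‖modularJ τ‖) 0 + 6 := by
  rcases le_or_gt (2 * π * τ.im) 6 with hsmall | hlarge
  · linarith [le_max_right (Real.log ‖modularJ τ‖) 0]
  have hq : ‖nome τ‖ ≤ 1 / 300 :=
    norm_nome τ ▸ (exp_le_exp.2 (by linarith)).trans exp_neg_six_le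
  have hj : exp (2 * π * τ.im - 6) ≤ ‖modularJ τ‖ := calc
    exp (2 * π * τ.im - 6) = exp (-6) / ‖nome τ‖ := by rw [norm_nome, ← exp_sub]; ring_nf
    _ ≤ 1 / (300 * ‖nome τ‖) := by rw [← div_div]; gcongr; exact exp_neg_six_le
    _ ≤ ‖modularJ τ‖ := modularJ_eq τ ▸ one_div_le_norm_jOfNome (Complex.exp_ne_zero _) hq
  have hlog := (le_log_iff_exp_le (hj.trans_lt' (exp_pos _))).2 hj
  linarith [le_max_left (Real.log ‖modularJ τ‖) 0]

/-- for `τ = a + bi` in the standard fundamental domain,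
`2πb ≤ log⁺|j(τ)| + 6`. -/
theorem two_pi_im_le_log_j (τ : ℂ) (him : 0 < τ.im)
    (hre : |τ.re| ≤ 1 / 2) (habs : 1 ≤ ‖τ‖) :
    2 * Real.pi * τ.im ≤ max (Real.log ‖modularJ τ‖) 0 + 6 :=
  two_pi_im_le_log_j_general τ
end
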